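/- (Theorem 5.5, momentum part) Under the hypotheses of the density part (γ > 1, ρ₋, ρ₊ > 0, u₋ > u₊, σ = (√ρ₋ u₋ + √ρ₊ u₊)/(√ρ₋ + √ρ₊), positive sequences ε₁ⁿ, ε₂ⁿ → 0, intermediate states ρ*ⁿ > max(ρ₋,ρ₊), u*ⁿ satisfying the two shock-curve relations, shock speeds σ₁ⁿ < σ₂ⁿ given by the Rankine–Hugoniot formulas), define mⁿ(ξ) = ρ₋u₋ for ξ < σ₁ⁿ, mⁿ(ξ) = ρ*ⁿu*ⁿ for σ₁ⁿ < ξ < σ₂ⁿ, mⁿ(ξ) = ρ₊u₊ for ξ > σ₂ⁿ. Then for every smooth compactly supported φ : ℝ → ℝ, ∫_ℝ mⁿ(ξ)φ(ξ)dξ → (σ(ρ₊u₊ − ρ₋u₋) − (ρ₊u₊² − ρ₋u₋²))·φ(σ) + ∫_ℝ H̃(ξ − σ)φ(ξ)dξ as n → ∞, where H̃(y) = ρ₋u₋ for y < 0 and H̃(y) = ρ₊u₊ for y > 0. -/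

import Mathlib

set_option maxHeartbeats 1000000

open MeasureTheory

section TSMDLhelpers
open Set Filter

private lemma TSMDL.splitIntegral (s1 s2 A B C : ℝ) (h12 : s1 ≤ s2) (φ : ℝ → ℝ)
    (hφ : Integrable φ) :
    ∫ ξ, (if ξ < s1 then A else if ξ < s2 then B else C) * φ ξ
      = A * (∫ ξ in Iio s1, φ ξ) + B * (∫ ξ in s1..s2, φ ξ)
        + C * (∫ ξ in Ici s2, φ ξ) := by
  have hmeas : Measurable (fun ξ : ℝ => if ξ < s1 then A else if ξ < s2 then B else C) := by
    apply Measurable.ite measurableSet_Iio measurable_const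
    exact Measurable.ite measurableSet_Iio measurable_const measurable_const
  have hint : Integrable (fun ξ => (if ξ < s1 then A else if ξ < s2 then B else C) * φ ξ) := by
    refine hφ.bdd_mul (c := max |A| (max |B| |C|)) hmeas.aestronglyMeasurable
      (Filter.Eventually.of_forall fun x => ?_)
    by_cases h1 : x < s1 <;> by_cases h2 : x < s2 <;>
      simp [h1, h2, Real.norm_eq_abs, le_max_iff, le_refl]
  have hsplit1 : (∫ ξ in Iio s1, (if ξ < s1 then A else if ξ < s2 then B else C) * φ ξ)
      + ∫ ξ in Ici s1, (if ξ < s1 then A else if ξ < s2 then B else C) * φ ξ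
      = ∫ ξ, (if ξ < s1 then A else if ξ < s2 then B else C) * φ ξ := by
    have := integral_add_compl (measurableSet_Iio (a := s1)) hint
    simpa [compl_Iio] using this
  have hunion : Ico s1 s2 ∪ Ici s2 = Ici s1 := Ico_union_Ici_eq_Ici h12
  have hdisj : Disjoint (Ico s1 s2) (Ici s2) :=
    Set.disjoint_left.mpr fun x hx hx' => absurd hx.2 (not_lt.mpr hx')
  have hsplit2 : (∫ ξ in Ici s1, (if ξ < s1 then A else if ξ < s2 then B else C) * φ ξ)
      = (∫ ξ in Ico s1 s2, (if ξ < s1 then A else if ξ < s2 then B else C) * φ ξ)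
      + ∫ ξ in Ici s2, (if ξ < s1 then A else if ξ < s2 then B else C) * φ ξ := by
    rw [← hunion, setIntegral_union hdisj measurableSet_Ici
      (hint.integrableOn) (hint.integrableOn)]
  have e1 : (∫ ξ in Iio s1, (if ξ < s1 then A else if ξ < s2 then B else C) * φ ξ)
      = A * ∫ ξ in Iio s1, φ ξ := by
    rw [setIntegral_congr_fun measurableSet_Iio (g := fun ξ => A * φ ξ)
      (fun x hx => by simp [Set.mem_Iio.mp hx]), integral_const_mul]
  have e2 : (∫ ξ in Ico s1 s2, (if ξ < s1 then A else if ξ < s2 then B else C) * φ ξ)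
      = B * ∫ ξ in s1..s2, φ ξ := by
    rw [setIntegral_congr_fun measurableSet_Ico (g := fun ξ => B * φ ξ)
      (fun x hx => by simp [not_lt.mpr hx.1, hx.2]), integral_const_mul,
      setIntegral_congr_set Ico_ae_eq_Ioc, intervalIntegral.integral_of_le h12]
  have e3 : (∫ ξ in Ici s2, (if ξ < s1 then A else if ξ < s2 then B else C) * φ ξ)
      = C * ∫ ξ in Ici s2, φ ξ := by
    rw [setIntegral_congr_fun measurableSet_Ici (g := fun ξ => C * φ ξ)
      (fun x hx => by
        have h2 : ¬ x < s2 := not_lt.mpr hx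
        have h1 : ¬ x < s1 := not_lt.mpr (le_trans h12 hx)
        simp [h1, h2]), integral_const_mul]
  rw [← hsplit1, hsplit2, e1, e2, e3]
  ring

private lemma TSMDL.intervalBound {K : NNReal} {φ : ℝ → ℝ} (hK : LipschitzWith K φ) (s a b : ℝ) :
    |(∫ t in a..b, φ t) - (b - a) * φ s| ≤ ((K : ℝ) * (|a - s| + |b - s|)) * |b - a| := by
  have hsub : (∫ t in a..b, φ t) - (b - a) * φ s = ∫ t in a..b, (φ t - φ s) := by
    rw [intervalIntegral.integral_sub (hK.continuous.intervalIntegrable _ _)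
      intervalIntegrable_const, intervalIntegral.integral_const, smul_eq_mul]
  rw [hsub]
  have key : ∀ x ∈ Set.uIoc a b, ‖φ x - φ s‖ ≤ (K : ℝ) * (|a - s| + |b - s|) := by
    intro x hx
    have hd : |φ x - φ s| ≤ (K : ℝ) * |x - s| := by
      have := hK.dist_le_mul x s
      rwa [Real.dist_eq, Real.dist_eq] at this
    have hxs : |x - s| ≤ |a - s| + |b - s| := by
      rcases Set.mem_uIoc.mp hx with ⟨h1, h2⟩ | ⟨h1, h2⟩ <;>
        (rw [abs_le]; constructor <;>
          linarith [le_abs_self (a - s), neg_abs_le (a - s), le_abs_self (b - s),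
            neg_abs_le (b - s), abs_nonneg (a - s), abs_nonneg (b - s)])
    have : |φ x - φ s| ≤ (K : ℝ) * (|a - s| + |b - s|) :=
      le_trans hd (mul_le_mul_of_nonneg_left hxs (by positivity))
    simpa [Real.norm_eq_abs] using this
  have := intervalIntegral.norm_integral_le_of_norm_le_const key
  simpa [Real.norm_eq_abs] using this


private lemma TSMDL.rhoAtTop (γ ρm ρp um up : ℝ) (hγ : 1 < γ) (hρm : 0 < ρm) (hρp : 0 < ρp)
    (hu : up < um)
    (ε₁ ε₂ ρs us : ℕ → ℝ)
    (hε₁pos : ∀ n, 0 < ε₁ n) (hε₂pos : ∀ n, 0 < ε₂ n)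
    (hε₁ : Filter.Tendsto ε₁ Filter.atTop (nhds 0))
    (hε₂ : Filter.Tendsto ε₂ Filter.atTop (nhds 0))
    (hρs : ∀ n, max ρm ρp < ρs n)
    (hd1 : ∀ n, 0 < ρm * ρs n - ε₁ n * (ρm + ρs n))
    (hd2 : ∀ n, 0 < ρp * ρs n - ε₁ n * (ρp + ρs n))
    (hback : ∀ n, us n - um =
      -Real.sqrt (ε₂ n * (ρs n - ρm) * ((ρs n) ^ γ - ρm ^ γ) /
        (γ * (ρm * ρs n - ε₁ n * (ρm + ρs n)))))
    (hforw : ∀ n, up - us n =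
      -Real.sqrt (ε₂ n * (ρs n - ρp) * ((ρs n) ^ γ - ρp ^ γ) /
        (γ * (ρp * ρs n - ε₁ n * (ρp + ρs n))))) :
    Filter.Tendsto ρs Filter.atTop Filter.atTop := by
  have hγ0 : (0:ℝ) < γ := by linarith
  have hρsm : ∀ n, ρm < ρs n := fun n => lt_of_le_of_lt (le_max_left _ _) (hρs n)
  have hρsp : ∀ n, ρp < ρs n := fun n => lt_of_le_of_lt (le_max_right _ _) (hρs n)
  have hΔ : (0:ℝ) < um - up := by linarith
  have hXpos : ∀ n, 0 < ε₂ n * (ρs n - ρm) * ((ρs n) ^ γ - ρm ^ γ) /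
      (γ * (ρm * ρs n - ε₁ n * (ρm + ρs n))) := fun n =>
    div_pos (mul_pos (mul_pos (hε₂pos n) (by linarith [hρsm n]))
      (by nlinarith [Real.rpow_lt_rpow hρm.le (hρsm n) hγ0]))
      (mul_pos hγ0 (hd1 n))
  have hYpos : ∀ n, 0 < ε₂ n * (ρs n - ρp) * ((ρs n) ^ γ - ρp ^ γ) /
      (γ * (ρp * ρs n - ε₁ n * (ρp + ρs n))) := fun n =>
    div_pos (mul_pos (mul_pos (hε₂pos n) (by linarith [hρsp n]))
      (by nlinarith [Real.rpow_lt_rpow hρp.le (hρsp n) hγ0]))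
      (mul_pos hγ0 (hd2 n))
  have ha2 : ∀ n, (um - us n)^2 = ε₂ n * (ρs n - ρm) * ((ρs n) ^ γ - ρm ^ γ) /
      (γ * (ρm * ρs n - ε₁ n * (ρm + ρs n))) := fun n => by
    have h := hback n
    have : um - us n = Real.sqrt (ε₂ n * (ρs n - ρm) * ((ρs n) ^ γ - ρm ^ γ) /
      (γ * (ρm * ρs n - ε₁ n * (ρm + ρs n)))) := by linarith
    rw [this, Real.sq_sqrt (hXpos n).le]
  have hb2 : ∀ n, (us n - up)^2 = ε₂ n * (ρs n - ρp) * ((ρs n) ^ γ - ρp ^ γ) /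
      (γ * (ρp * ρs n - ε₁ n * (ρp + ρs n))) := fun n => by
    have h := hforw n
    have : us n - up = Real.sqrt (ε₂ n * (ρs n - ρp) * ((ρs n) ^ γ - ρp ^ γ) /
      (γ * (ρp * ρs n - ε₁ n * (ρp + ρs n)))) := by linarith
    rw [this, Real.sq_sqrt (hYpos n).le]
  have hanneg : ∀ n, 0 ≤ um - us n := fun n => by
    have h := hback n
    have := Real.sqrt_nonneg (ε₂ n * (ρs n - ρm) * ((ρs n) ^ γ - ρm ^ γ) /
      (γ * (ρm * ρs n - ε₁ n * (ρm + ρs n))))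
    linarith
  have hbnneg : ∀ n, 0 ≤ us n - up := fun n => by
    have h := hforw n
    have := Real.sqrt_nonneg (ε₂ n * (ρs n - ρp) * ((ρs n) ^ γ - ρp ^ γ) /
      (γ * (ρp * ρs n - ε₁ n * (ρp + ρs n))))
    linarith
  -- the tendsto
  rw [tendsto_atTop]
  intro M
  set ρ0 : ℝ := max ρm ρp with hρ0def
  have hρ0 : (0:ℝ) < ρ0 := lt_max_iff.mpr (Or.inl hρm)
  set ρq : ℝ := min ρm ρp with hρqdef
  have hρq : (0:ℝ) < ρq := lt_min hρm hρp
  set M' : ℝ := max M ρ0 + 1 with hM'def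
  have hM'0 : 0 < M' := by positivity
  have hMM' : M ≤ M' := le_trans (le_max_left M ρ0) (by simp [hM'def])
  set c1 : ℝ := ρq * ρ0 / (2 * (ρm + ρp + M')) with hc1def
  have hc1 : 0 < c1 := by positivity
  set Cst : ℝ := M' * M' ^ γ * 2 / (γ * (ρq * ρ0)) with hCdef
  have hCst : 0 < Cst := by
    have : (0:ℝ) < M' ^ γ := Real.rpow_pos_of_pos hM'0 γ
    positivity
  set c2 : ℝ := (um - up)^2 / 8 / Cst with hc2def
  have hc2 : 0 < c2 := by positivity
  filter_upwards [hε₁.eventually (eventually_lt_nhds hc1),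
    hε₂.eventually (eventually_lt_nhds hc2)] with n h1n h2n
  by_contra hcon
  push_neg at hcon
  have hρsM : ρs n < M' := by
    have : ρ0 ≤ max M ρ0 := le_max_right _ _
    nlinarith [hρs n]
  -- lower bound on denominators
  have hquo : ∀ ρ : ℝ, 0 < ρ → ρq ≤ ρ → ρ ≤ ρm + ρp → ρ < ρs n →
      ρq * ρ0 / 2 ≤ ρ * ρs n - ε₁ n * (ρ + ρs n) := by
    intro ρ hρpos hρq' hsum hρlt
    have h1 : ρ * ρs n ≥ ρq * ρ0 := by nlinarith [hρs n]
    have h2 : ε₁ n * (ρ + ρs n) ≤ c1 * (ρm + ρp + M') := by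
      have hle : ρ + ρs n ≤ ρm + ρp + M' := by nlinarith
      have h0 : 0 < ρ + ρs n := by nlinarith
      nlinarith [(hε₁pos n)]
    have : c1 * (ρm + ρp + M') = ρq * ρ0 / 2 := by
      rw [hc1def]; field_simp
    nlinarith
  have hnum : ∀ ρ : ℝ, 0 < ρ → ρ < ρs n →
      ε₂ n * (ρs n - ρ) * ((ρs n) ^ γ - ρ ^ γ) ≤ ε₂ n * (M' * M' ^ γ) := by
    intro ρ hρpos hρlt
    have h1 : ρs n - ρ ≤ M' := by linarith
    have h2 : (ρs n) ^ γ - ρ ^ γ ≤ M' ^ γ := by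
      have hr1 : (ρs n) ^ γ ≤ M' ^ γ :=
        Real.rpow_le_rpow (by linarith) hρsM.le hγ0.le
      have hr2 : (0:ℝ) ≤ ρ ^ γ := Real.rpow_nonneg hρpos.le γ
      linarith
    have h3 : 0 ≤ ρs n - ρ := by linarith
    have h4 : 0 ≤ (ρs n) ^ γ - ρ ^ γ := by
      nlinarith [Real.rpow_lt_rpow hρpos.le hρlt hγ0]
    have h5 : (ρs n - ρ) * ((ρs n) ^ γ - ρ ^ γ) ≤ M' * M' ^ γ :=
      mul_le_mul h1 h2 h4 hM'0.le
    calc ε₂ n * (ρs n - ρ) * ((ρs n) ^ γ - ρ ^ γ)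
        = ε₂ n * ((ρs n - ρ) * ((ρs n) ^ γ - ρ ^ γ)) := by ring
      _ ≤ ε₂ n * (M' * M' ^ γ) := mul_le_mul_of_nonneg_left h5 (hε₂pos n).le
  have hXle : (um - us n)^2 < (um - up)^2 / 8 := by
    rw [ha2 n]
    calc ε₂ n * (ρs n - ρm) * ((ρs n) ^ γ - ρm ^ γ) /
        (γ * (ρm * ρs n - ε₁ n * (ρm + ρs n)))
        ≤ ε₂ n * (M' * M' ^ γ) / (γ * (ρq * ρ0 / 2)) := by
          apply div_le_div₀ (mul_nonneg (hε₂pos n).le (by positivity))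
            (hnum ρm hρm (hρsm n)) (by positivity)
          have := hquo ρm hρm (min_le_left _ _) (by linarith) (hρsm n)
          nlinarith
      _ = ε₂ n * Cst := by rw [hCdef]; field_simp
      _ < c2 * Cst := by nlinarith
      _ = (um - up)^2 / 8 := by rw [hc2def]; field_simp
  have hYle : (us n - up)^2 < (um - up)^2 / 8 := by
    rw [hb2 n]
    calc ε₂ n * (ρs n - ρp) * ((ρs n) ^ γ - ρp ^ γ) /
        (γ * (ρp * ρs n - ε₁ n * (ρp + ρs n)))
        ≤ ε₂ n * (M' * M' ^ γ) / (γ * (ρq * ρ0 / 2)) := by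
          apply div_le_div₀ (mul_nonneg (hε₂pos n).le (by positivity))
            (hnum ρp hρp (hρsp n)) (by positivity)
          have := hquo ρp hρp (min_le_right _ _) (by linarith) (hρsp n)
          nlinarith
      _ = ε₂ n * Cst := by rw [hCdef]; field_simp
      _ < c2 * Cst := by nlinarith
      _ = (um - up)^2 / 8 := by rw [hc2def]; field_simp
  nlinarith [hanneg n, hbnneg n, sq_nonneg (um - us n - (us n - up))]


private lemma TSMDL.limits (γ ρm ρp um up σ : ℝ) (hγ : 1 < γ) (hρm : 0 < ρm) (hρp : 0 < ρp)
    (hu : up < um)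
    (hσ : σ = (Real.sqrt ρm * um + Real.sqrt ρp * up) /
      (Real.sqrt ρm + Real.sqrt ρp))
    (ε₁ ε₂ ρs us σ₁ σ₂ : ℕ → ℝ)
    (hε₁pos : ∀ n, 0 < ε₁ n) (hε₂pos : ∀ n, 0 < ε₂ n)
    (hε₁ : Filter.Tendsto ε₁ Filter.atTop (nhds 0))
    (hε₂ : Filter.Tendsto ε₂ Filter.atTop (nhds 0))
    (hρs : ∀ n, max ρm ρp < ρs n)
    (hd1 : ∀ n, 0 < ρm * ρs n - ε₁ n * (ρm + ρs n))
    (hd2 : ∀ n, 0 < ρp * ρs n - ε₁ n * (ρp + ρs n))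
    (hback : ∀ n, us n - um =
      -Real.sqrt (ε₂ n * (ρs n - ρm) * ((ρs n) ^ γ - ρm ^ γ) /
        (γ * (ρm * ρs n - ε₁ n * (ρm + ρs n)))))
    (hforw : ∀ n, up - us n =
      -Real.sqrt (ε₂ n * (ρs n - ρp) * ((ρs n) ^ γ - ρp ^ γ) /
        (γ * (ρp * ρs n - ε₁ n * (ρp + ρs n)))))
    (hσ₁ : ∀ n, σ₁ n = us n + (ρm - 2 * ε₁ n) * (us n - um) / (ρs n - ρm))
    (hσ₂ : ∀ n, σ₂ n = us n + (ρp - 2 * ε₁ n) * (up - us n) / (ρp - ρs n))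
    (hρsinf : Filter.Tendsto ρs Filter.atTop Filter.atTop) :
    Filter.Tendsto σ₁ Filter.atTop (nhds σ) ∧
    Filter.Tendsto σ₂ Filter.atTop (nhds σ) ∧
    Filter.Tendsto (fun n => ρs n * us n * (σ₂ n - σ₁ n)) Filter.atTop
      (nhds (σ * (ρp * up - ρm * um) - (ρp * up ^ 2 - ρm * um ^ 2))) := by
  have hγ0 : (0:ℝ) < γ := by linarith
  have hρsm : ∀ n, ρm < ρs n := fun n => lt_of_le_of_lt (le_max_left _ _) (hρs n)
  have hρsp : ∀ n, ρp < ρs n := fun n => lt_of_le_of_lt (le_max_right _ _) (hρs n)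
  have hρspos : ∀ n, 0 < ρs n := fun n => lt_trans hρm (hρsm n)
  have hΔ : (0:ℝ) < um - up := by linarith
  have hsm : 0 < Real.sqrt ρm := Real.sqrt_pos.mpr hρm
  have hsp : 0 < Real.sqrt ρp := Real.sqrt_pos.mpr hρp
  have hσS : σ * (Real.sqrt ρm + Real.sqrt ρp)
      = Real.sqrt ρm * um + Real.sqrt ρp * up := by
    rw [hσ]; field_simp
  have hsm2 : Real.sqrt ρm ^ 2 = ρm := Real.sq_sqrt hρm.le
  have hsp2 : Real.sqrt ρp ^ 2 = ρp := Real.sq_sqrt hρp.le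
  have hXpos : ∀ n, 0 < ε₂ n * (ρs n - ρm) * ((ρs n) ^ γ - ρm ^ γ) /
      (γ * (ρm * ρs n - ε₁ n * (ρm + ρs n))) := fun n =>
    div_pos (mul_pos (mul_pos (hε₂pos n) (by linarith [hρsm n]))
      (by nlinarith [Real.rpow_lt_rpow hρm.le (hρsm n) hγ0]))
      (mul_pos hγ0 (hd1 n))
  have hYpos : ∀ n, 0 < ε₂ n * (ρs n - ρp) * ((ρs n) ^ γ - ρp ^ γ) /
      (γ * (ρp * ρs n - ε₁ n * (ρp + ρs n))) := fun n =>
    div_pos (mul_pos (mul_pos (hε₂pos n) (by linarith [hρsp n]))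
      (by nlinarith [Real.rpow_lt_rpow hρp.le (hρsp n) hγ0]))
      (mul_pos hγ0 (hd2 n))
  have hapos : ∀ n, 0 < um - us n := fun n => by
    have h := hback n
    have h2 : um - us n = Real.sqrt (ε₂ n * (ρs n - ρm) * ((ρs n) ^ γ - ρm ^ γ) /
      (γ * (ρm * ρs n - ε₁ n * (ρm + ρs n)))) := by linarith
    rw [h2]; exact Real.sqrt_pos.mpr (hXpos n)
  have hbpos : ∀ n, 0 < us n - up := fun n => by
    have h := hforw n
    have h2 : us n - up = Real.sqrt (ε₂ n * (ρs n - ρp) * ((ρs n) ^ γ - ρp ^ γ) /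
      (γ * (ρp * ρs n - ε₁ n * (ρp + ρs n)))) := by linarith
    rw [h2]; exact Real.sqrt_pos.mpr (hYpos n)
  have ha2 : ∀ n, (um - us n)^2 = ε₂ n * (ρs n - ρm) * ((ρs n) ^ γ - ρm ^ γ) /
      (γ * (ρm * ρs n - ε₁ n * (ρm + ρs n))) := fun n => by
    have h := hback n
    have h2 : um - us n = Real.sqrt (ε₂ n * (ρs n - ρm) * ((ρs n) ^ γ - ρm ^ γ) /
      (γ * (ρm * ρs n - ε₁ n * (ρm + ρs n)))) := by linarith
    rw [h2, Real.sq_sqrt (hXpos n).le]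
  have hb2 : ∀ n, (us n - up)^2 = ε₂ n * (ρs n - ρp) * ((ρs n) ^ γ - ρp ^ γ) /
      (γ * (ρp * ρs n - ε₁ n * (ρp + ρs n))) := fun n => by
    have h := hforw n
    have h2 : us n - up = Real.sqrt (ε₂ n * (ρs n - ρp) * ((ρs n) ^ γ - ρp ^ γ) /
      (γ * (ρp * ρs n - ε₁ n * (ρp + ρs n)))) := by linarith
    rw [h2, Real.sq_sqrt (hYpos n).le]
  -- inverse limits
  have hinvm : Tendsto (fun n => (ρs n - ρm)⁻¹) atTop (nhds 0) :=
    (tendsto_atTop_add_const_right atTop (-ρm) hρsinf).inv_tendsto_atTop.congr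
      (fun n => by simp [Pi.inv_apply, sub_eq_add_neg])
  have hinvp : Tendsto (fun n => (ρs n - ρp)⁻¹) atTop (nhds 0) :=
    (tendsto_atTop_add_const_right atTop (-ρp) hρsinf).inv_tendsto_atTop.congr
      (fun n => by simp [Pi.inv_apply, sub_eq_add_neg])
  have hinvs : Tendsto (fun n => (ρs n)⁻¹) atTop (nhds 0) :=
    hρsinf.inv_tendsto_atTop
  have hrpowinf : Tendsto (fun n => (ρs n) ^ γ) atTop atTop :=
    (tendsto_rpow_atTop hγ0).comp hρsinf
  have hinvg : Tendsto (fun n => ((ρs n) ^ γ - ρp ^ γ)⁻¹) atTop (nhds 0) :=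
    (tendsto_atTop_add_const_right atTop (-ρp ^ γ) hrpowinf).inv_tendsto_atTop.congr
      (fun n => by simp [Pi.inv_apply, sub_eq_add_neg])
  -- ratio limits
  have hR1 : Tendsto (fun n => (ρs n - ρm) / (ρs n - ρp)) atTop (nhds 1) := by
    have h := (hinvp.const_mul (ρp - ρm)).const_add 1
    rw [show (1:ℝ) + (ρp - ρm) * 0 = 1 by ring] at h
    refine h.congr fun n => ?_
    have h2 : ρs n - ρp ≠ 0 := ne_of_gt (by linarith [hρsp n])
    field_simp
    ring
  have hR2 : Tendsto (fun n => ((ρs n) ^ γ - ρm ^ γ) / ((ρs n) ^ γ - ρp ^ γ))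
      atTop (nhds 1) := by
    have h := (hinvg.const_mul (ρp ^ γ - ρm ^ γ)).const_add 1
    rw [show (1:ℝ) + (ρp ^ γ - ρm ^ γ) * 0 = 1 by ring] at h
    refine h.congr fun n => ?_
    have h2 : (ρs n) ^ γ - ρp ^ γ ≠ 0 := ne_of_gt
      (by nlinarith [Real.rpow_lt_rpow hρp.le (hρsp n) hγ0])
    field_simp
    ring
  have hDp' : Tendsto (fun n => (ρp * ρs n - ε₁ n * (ρp + ρs n)) * (ρs n)⁻¹)
      atTop (nhds ρp) := by
    have h := (hε₁.mul ((hinvs.const_mul ρp).add_const 1)).const_sub ρp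
    rw [show ρp - 0 * (ρp * 0 + 1) = ρp by ring] at h
    refine h.congr fun n => ?_
    have := (hρspos n).ne'
    field_simp
  have hDm' : Tendsto (fun n => (ρm * ρs n - ε₁ n * (ρm + ρs n)) * (ρs n)⁻¹)
      atTop (nhds ρm) := by
    have h := (hε₁.mul ((hinvs.const_mul ρm).add_const 1)).const_sub ρm
    rw [show ρm - 0 * (ρm * 0 + 1) = ρm by ring] at h
    refine h.congr fun n => ?_
    have := (hρspos n).ne'
    field_simp
  have hR3 : Tendsto (fun n => (ρp * ρs n - ε₁ n * (ρp + ρs n)) /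
      (ρm * ρs n - ε₁ n * (ρm + ρs n))) atTop (nhds (ρp / ρm)) := by
    have h := hDp'.div hDm' (ne_of_gt hρm)
    refine h.congr fun n => ?_
    have h6 : ρm * ρs n - ε₁ n * (ρm + ρs n) ≠ 0 := ne_of_gt (hd1 n)
    have h0 : ρs n ≠ 0 := (hρspos n).ne'
    simp only [Pi.div_apply]
    field_simp
  -- the squared ratio
  have hratio : ∀ n, (um - us n)^2 / (us n - up)^2
      = ((ρs n - ρm) / (ρs n - ρp)) * (((ρs n) ^ γ - ρm ^ γ) / ((ρs n) ^ γ - ρp ^ γ))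
        * ((ρp * ρs n - ε₁ n * (ρp + ρs n)) / (ρm * ρs n - ε₁ n * (ρm + ρs n))) := by
    intro n
    rw [ha2 n, hb2 n]
    have h1 : γ * (ρm * ρs n - ε₁ n * (ρm + ρs n)) ≠ 0 :=
      ne_of_gt (mul_pos hγ0 (hd1 n))
    have h2 : γ * (ρp * ρs n - ε₁ n * (ρp + ρs n)) ≠ 0 :=
      ne_of_gt (mul_pos hγ0 (hd2 n))
    have h3 : ε₂ n ≠ 0 := (hε₂pos n).ne'
    have h4 : ρs n - ρp ≠ 0 := ne_of_gt (by linarith [hρsp n])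
    have h5 : (ρs n) ^ γ - ρp ^ γ ≠ 0 := ne_of_gt
      (by nlinarith [Real.rpow_lt_rpow hρp.le (hρsp n) hγ0])
    have h6 : ρm * ρs n - ε₁ n * (ρm + ρs n) ≠ 0 := ne_of_gt (hd1 n)
    have h7 : ρp * ρs n - ε₁ n * (ρp + ρs n) ≠ 0 := ne_of_gt (hd2 n)
    field_simp
  have hQ2 : Tendsto (fun n => (um - us n)^2 / (us n - up)^2) atTop (nhds (ρp / ρm)) := by
    have h := (hR1.mul hR2).mul hR3
    rw [show (1:ℝ) * 1 * (ρp / ρm) = ρp / ρm by ring] at h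
    exact h.congr fun n => (hratio n).symm
  have hQ : Tendsto (fun n => (um - us n) / (us n - up)) atTop
      (nhds (Real.sqrt ρp / Real.sqrt ρm)) := by
    have h := (Real.continuous_sqrt.tendsto (ρp / ρm)).comp hQ2
    rw [show Real.sqrt (ρp / ρm) = Real.sqrt ρp / Real.sqrt ρm from
      Real.sqrt_div hρp.le ρm] at h
    refine h.congr fun n => ?_
    show Real.sqrt ((um - us n)^2 / (us n - up)^2) = _
    rw [Real.sqrt_div (sq_nonneg _), Real.sqrt_sq (hapos n).le, Real.sqrt_sq (hbpos n).le]
  have hqden : (0:ℝ) < 1 + Real.sqrt ρp / Real.sqrt ρm := by positivity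
  have hblim : Tendsto (fun n => us n - up) atTop
      (nhds ((um - up) / (1 + Real.sqrt ρp / Real.sqrt ρm))) := by
    have h := (((hQ.const_add 1)).inv₀ hqden.ne').const_mul (um - up)
    rw [← div_eq_mul_inv] at h
    refine h.congr fun n => ?_
    rw [← div_eq_mul_inv]
    have hb := (hbpos n).ne'
    field_simp
    rw [show us n - up + (um - us n) = um - up by ring, div_self hΔ.ne']
  have husσ : up + (um - up) / (1 + Real.sqrt ρp / Real.sqrt ρm) = σ := by
    rw [hσ]
    field_simp
    ring
  have hus : Tendsto us atTop (nhds σ) := by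
    have h := hblim.const_add up
    rw [husσ] at h
    exact h.congr fun n => by ring
  -- σ₁, σ₂ limits
  have hσ₁lim : Tendsto σ₁ atTop (nhds σ) := by
    have h := hus.add ((((hε₁.const_mul 2).const_sub ρm).mul
      (hus.sub_const um)).mul hinvm)
    rw [show σ + (ρm - 2 * 0) * (σ - um) * 0 = σ by ring] at h
    refine h.congr fun n => ?_
    rw [hσ₁ n]
    ring
  have hσ₂lim : Tendsto σ₂ atTop (nhds σ) := by
    have hinvp2 : Tendsto (fun n => (ρp - ρs n)⁻¹) atTop (nhds 0) := by
      have := hinvp.neg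
      rw [neg_zero] at this
      exact this.congr fun n => by rw [← inv_neg]; ring_nf
    have h := hus.add ((((hε₁.const_mul 2).const_sub ρp).mul
      (hus.const_sub up)).mul hinvp2)
    rw [show σ + (ρp - 2 * 0) * (up - σ) * 0 = σ by ring] at h
    refine h.congr fun n => ?_
    rw [hσ₂ n]
    ring
  refine ⟨hσ₁lim, hσ₂lim, ?_⟩
  -- weight limit
  have hPpt : ∀ n, ρs n * us n * (σ₂ n - σ₁ n)
      = us n * ((ρp - 2 * ε₁ n) * (us n - up) * (1 + ρp * (ρs n - ρp)⁻¹)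
        + (ρm - 2 * ε₁ n) * (um - us n) * (1 + ρm * (ρs n - ρm)⁻¹)) := by
    intro n
    rw [hσ₁ n, hσ₂ n]
    have h4 : ρs n - ρp ≠ 0 := ne_of_gt (by linarith [hρsp n])
    have h5 : ρs n - ρm ≠ 0 := ne_of_gt (by linarith [hρsm n])
    have h6 : ρp - ρs n ≠ 0 := by intro h; apply h4; linarith
    field_simp
    ring
  have hlimP : Tendsto (fun n => us n * ((ρp - 2 * ε₁ n) * (us n - up) * (1 + ρp * (ρs n - ρp)⁻¹)
        + (ρm - 2 * ε₁ n) * (um - us n) * (1 + ρm * (ρs n - ρm)⁻¹))) atTop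
      (nhds (σ * ((ρp - 2 * 0) * (σ - up) * (1 + ρp * 0)
        + (ρm - 2 * 0) * (um - σ) * (1 + ρm * 0)))) := by
    apply hus.mul
    exact ((((hε₁.const_mul 2).const_sub ρp).mul (hus.sub_const up)).mul
        ((hinvp.const_mul ρp).const_add 1)).add
      ((((hε₁.const_mul 2).const_sub ρm).mul (hus.const_sub um)).mul
        ((hinvm.const_mul ρm).const_add 1))
  have hWval : σ * ((ρp - 2 * 0) * (σ - up) * (1 + ρp * 0)
        + (ρm - 2 * 0) * (um - σ) * (1 + ρm * 0))
      = σ * (ρp * up - ρm * um) - (ρp * up ^ 2 - ρm * um ^ 2) := by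
    linear_combination ((Real.sqrt ρp - Real.sqrt ρm) * σ - Real.sqrt ρp * up
      + Real.sqrt ρm * um) * hσS - (σ - up)^2 * hsp2 + (σ - um)^2 * hsm2
  rw [hWval] at hlimP
  exact hlimP.congr fun n => (hPpt n).symm

private lemma TSMDL.assemble (ρm ρp um up σ W : ℝ)
    (σ₁ σ₂ ρs us : ℕ → ℝ) (hlt : ∀ n, σ₁ n < σ₂ n)
    (hσ₁lim : Filter.Tendsto σ₁ Filter.atTop (nhds σ))
    (hσ₂lim : Filter.Tendsto σ₂ Filter.atTop (nhds σ))
    (hP : Filter.Tendsto (fun n => ρs n * us n * (σ₂ n - σ₁ n)) Filter.atTop (nhds W))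
    (mn : ℕ → ℝ → ℝ)
    (hmn : ∀ n ξ, mn n ξ =
      if ξ < σ₁ n then ρm * um else if ξ < σ₂ n then ρs n * us n
      else ρp * up)
    (Ht : ℝ → ℝ) (hHt : ∀ y, Ht y = if y < 0 then ρm * um else ρp * up)
    (φ : ℝ → ℝ) (hφC : ContDiff ℝ (⊤ : ℕ∞) φ) (hφS : HasCompactSupport φ) :
    Filter.Tendsto (fun n => ∫ ξ, mn n ξ * φ ξ) Filter.atTop
      (nhds (W * φ σ + ∫ ξ, Ht (ξ - σ) * φ ξ)) := by
  have hφint : Integrable φ := hφC.continuous.integrable_of_hasCompactSupport hφS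
  obtain ⟨K, hK⟩ := ContDiff.lipschitzWith_of_hasCompactSupport hφS hφC (by simp)
  have hIicIio : ∀ b : ℝ, (∫ ξ in Iio b, φ ξ) = ∫ ξ in Iic b, φ ξ := fun b =>
    setIntegral_congr_set Iio_ae_eq_Iic
  have hIci : ∀ b : ℝ, (∫ ξ in Ici b, φ ξ) = (∫ ξ, φ ξ) - ∫ ξ in Iio b, φ ξ := fun b => by
    have := integral_add_compl (measurableSet_Iio (a := b)) hφint
    rw [compl_Iio] at this
    linarith
  have hmnint : ∀ n, (∫ ξ, mn n ξ * φ ξ)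
      = ρm * um * (∫ ξ in Iio (σ₁ n), φ ξ)
        + (ρs n * us n) * (∫ ξ in σ₁ n..σ₂ n, φ ξ)
        + ρp * up * (∫ ξ in Ici (σ₂ n), φ ξ) := fun n => by
    rw [show (fun ξ => mn n ξ * φ ξ) = fun ξ =>
      (if ξ < σ₁ n then ρm * um else if ξ < σ₂ n then ρs n * us n else ρp * up) * φ ξ
      from funext fun ξ => by rw [hmn n ξ]]
    exact TSMDL.splitIntegral _ _ _ _ _ (hlt n).le φ hφint
  have hHtint : (∫ ξ, Ht (ξ - σ) * φ ξ)
      = ρm * um * (∫ ξ in Iio σ, φ ξ) + ρp * up * (∫ ξ in Ici σ, φ ξ) := by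
    rw [show (fun ξ => Ht (ξ - σ) * φ ξ) = fun ξ =>
      (if ξ < σ then ρm * um else if ξ < σ then (0:ℝ) else ρp * up) * φ ξ
      from funext fun ξ => by
        by_cases h : ξ < σ <;> simp [hHt, h, sub_neg]]
    rw [TSMDL.splitIntegral σ σ _ _ _ le_rfl φ hφint]
    simp
  have hdiff : ∀ n, (∫ ξ, mn n ξ * φ ξ) = (∫ ξ, Ht (ξ - σ) * φ ξ)
      + (ρm * um * (∫ ξ in σ..σ₁ n, φ ξ)
        + (ρs n * us n) * (∫ ξ in σ₁ n..σ₂ n, φ ξ)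
        + ρp * up * (∫ ξ in σ₂ n..σ, φ ξ)) := fun n => by
    have e1 : (∫ ξ in Iio (σ₁ n), φ ξ) - (∫ ξ in Iio σ, φ ξ) = ∫ ξ in σ..σ₁ n, φ ξ := by
      rw [hIicIio, hIicIio]
      exact intervalIntegral.integral_Iic_sub_Iic hφint.integrableOn hφint.integrableOn
    have e2 : (∫ ξ in Ici (σ₂ n), φ ξ) - (∫ ξ in Ici σ, φ ξ) = ∫ ξ in σ₂ n..σ, φ ξ := by
      rw [hIci, hIci, hIicIio, hIicIio]
      have h3 := intervalIntegral.integral_Iic_sub_Iic (f := φ) (μ := volume) (a := σ₂ n) (b := σ)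
        hφint.integrableOn hφint.integrableOn
      linarith
    rw [hmnint n, hHtint]
    linear_combination (ρm * um) * e1 + (ρp * up) * e2
  -- error terms
  have he : Filter.Tendsto (fun n => |σ₁ n - σ|) Filter.atTop (nhds 0) := by
    have := (hσ₁lim.sub_const σ).abs
    simpa using this
  have hf : Filter.Tendsto (fun n => |σ₂ n - σ|) Filter.atTop (nhds 0) := by
    have := (hσ₂lim.sub_const σ).abs
    simpa using this
  have hg : Filter.Tendsto (fun n => |σ - σ₂ n|) Filter.atTop (nhds 0) := by
    have := (hσ₂lim.const_sub σ).abs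
    simpa using this
  have hPabs : Filter.Tendsto (fun n => |ρs n * us n * (σ₂ n - σ₁ n)|)
      Filter.atTop (nhds |W|) := hP.abs
  have hh : Filter.Tendsto (fun n =>
      |ρm * um| * (((K:ℝ) * |σ₁ n - σ|) * |σ₁ n - σ|)
      + ((K:ℝ) * (|σ₁ n - σ| + |σ₂ n - σ|)) * |ρs n * us n * (σ₂ n - σ₁ n)|
      + |ρp * up| * (((K:ℝ) * |σ₂ n - σ|) * |σ - σ₂ n|)) Filter.atTop (nhds 0) := by
    have T1 := (((he.const_mul (K:ℝ)).mul he).const_mul (|ρm * um|))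
    have T2 := ((he.add hf).const_mul (K:ℝ)).mul hPabs
    have T3 := (((hf.const_mul (K:ℝ)).mul hg).const_mul (|ρp * up|))
    have := (T1.add T2).add T3
    rw [show |ρm * um| * ((K:ℝ) * 0 * 0) + (K:ℝ) * (0 + 0) * |W|
      + |ρp * up| * ((K:ℝ) * 0 * 0) = 0 by ring] at this
    exact this
  have hG : Filter.Tendsto (fun n =>
      ρm * um * ((∫ ξ in σ..σ₁ n, φ ξ) - (σ₁ n - σ) * φ σ)
      + (ρs n * us n) * ((∫ ξ in σ₁ n..σ₂ n, φ ξ) - (σ₂ n - σ₁ n) * φ σ)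
      + ρp * up * ((∫ ξ in σ₂ n..σ, φ ξ) - (σ - σ₂ n) * φ σ))
      Filter.atTop (nhds 0) := by
    apply squeeze_zero_norm _ hh
    intro n
    have b1 := TSMDL.intervalBound hK σ σ (σ₁ n)
    simp only [sub_self, abs_zero, zero_add] at b1
    have b2 := TSMDL.intervalBound hK σ (σ₁ n) (σ₂ n)
    have b3 := TSMDL.intervalBound hK σ (σ₂ n) σ
    simp only [sub_self, abs_zero, add_zero] at b3
    rw [Real.norm_eq_abs]
    have habs : ∀ x y z : ℝ, |x + y + z| ≤ |x| + |y| + |z| := fun x y z =>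
      (abs_add_le _ _).trans (by linarith [abs_add_le x y])
    refine le_trans (habs _ _ _) ?_
    have m1 : |ρm * um * ((∫ ξ in σ..σ₁ n, φ ξ) - (σ₁ n - σ) * φ σ)|
        ≤ |ρm * um| * (((K:ℝ) * |σ₁ n - σ|) * |σ₁ n - σ|) := by
      rw [abs_mul]
      exact mul_le_mul_of_nonneg_left b1 (abs_nonneg _)
    have m2 : |(ρs n * us n) * ((∫ ξ in σ₁ n..σ₂ n, φ ξ) - (σ₂ n - σ₁ n) * φ σ)|
        ≤ ((K:ℝ) * (|σ₁ n - σ| + |σ₂ n - σ|)) * |ρs n * us n * (σ₂ n - σ₁ n)| := by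
      rw [abs_mul]
      calc |ρs n * us n| * |(∫ ξ in σ₁ n..σ₂ n, φ ξ) - (σ₂ n - σ₁ n) * φ σ|
          ≤ |ρs n * us n| * (((K:ℝ) * (|σ₁ n - σ| + |σ₂ n - σ|)) * |σ₂ n - σ₁ n|) :=
            mul_le_mul_of_nonneg_left b2 (abs_nonneg _)
        _ = ((K:ℝ) * (|σ₁ n - σ| + |σ₂ n - σ|)) * (|ρs n * us n| * |σ₂ n - σ₁ n|) := by ring
        _ = ((K:ℝ) * (|σ₁ n - σ| + |σ₂ n - σ|)) * |ρs n * us n * (σ₂ n - σ₁ n)| := by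
            rw [← abs_mul (ρs n * us n) (σ₂ n - σ₁ n)]
    have m3 : |ρp * up * ((∫ ξ in σ₂ n..σ, φ ξ) - (σ - σ₂ n) * φ σ)|
        ≤ |ρp * up| * (((K:ℝ) * |σ₂ n - σ|) * |σ - σ₂ n|) := by
      rw [abs_mul]
      exact mul_le_mul_of_nonneg_left b3 (abs_nonneg _)
    linarith
  have hB : Filter.Tendsto (fun n => ρm * um * (σ₁ n - σ)
      + (ρs n * us n) * (σ₂ n - σ₁ n) + ρp * up * (σ - σ₂ n)) Filter.atTop (nhds W) := by
    have := (((hσ₁lim.sub_const σ).const_mul (ρm * um)).add hP).add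
      ((hσ₂lim.const_sub σ).const_mul (ρp * up))
    rw [show ρm * um * (σ - σ) + W + ρp * up * (σ - σ) = W by ring] at this
    exact this
  have hE : Filter.Tendsto (fun n =>
      ρm * um * (∫ ξ in σ..σ₁ n, φ ξ)
      + (ρs n * us n) * (∫ ξ in σ₁ n..σ₂ n, φ ξ)
      + ρp * up * (∫ ξ in σ₂ n..σ, φ ξ)) Filter.atTop (nhds (W * φ σ)) := by
    have := hG.add (hB.mul_const (φ σ))
    rw [zero_add] at this
    exact this.congr fun n => by ring
  have final := hE.const_add (∫ ξ, Ht (ξ - σ) * φ ξ)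
  rw [show (∫ ξ, Ht (ξ - σ) * φ ξ) + W * φ σ = W * φ σ + ∫ ξ, Ht (ξ - σ) * φ ξ by ring]
    at final
  exact final.congr fun n => (hdiff n).symm

end TSMDLhelpers

open Set Filter in
/-- Theorem 5.5, momentum part: the momentum of the two-shock
Riemann solution converges in the sense of distributions to a step function
plus a Dirac mass at σ with weight σ[ρu] − [ρu²]. -/
theorem two_shock_momentum_delta_limit
    (γ ρm ρp um up σ : ℝ) (hγ : 1 < γ) (hρm : 0 < ρm) (hρp : 0 < ρp)
    (hu : up < um)
    (hσ : σ = (Real.sqrt ρm * um + Real.sqrt ρp * up) /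
      (Real.sqrt ρm + Real.sqrt ρp))
    (ε₁ ε₂ ρs us σ₁ σ₂ : ℕ → ℝ)
    (hε₁pos : ∀ n, 0 < ε₁ n) (hε₂pos : ∀ n, 0 < ε₂ n)
    (hε₁ : Filter.Tendsto ε₁ Filter.atTop (nhds 0))
    (hε₂ : Filter.Tendsto ε₂ Filter.atTop (nhds 0))
    (hρs : ∀ n, max ρm ρp < ρs n)
    (hd1 : ∀ n, 0 < ρm * ρs n - ε₁ n * (ρm + ρs n))
    (hd2 : ∀ n, 0 < ρp * ρs n - ε₁ n * (ρp + ρs n))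
    (hback : ∀ n, us n - um =
      -Real.sqrt (ε₂ n * (ρs n - ρm) * ((ρs n) ^ γ - ρm ^ γ) /
        (γ * (ρm * ρs n - ε₁ n * (ρm + ρs n)))))
    (hforw : ∀ n, up - us n =
      -Real.sqrt (ε₂ n * (ρs n - ρp) * ((ρs n) ^ γ - ρp ^ γ) /
        (γ * (ρp * ρs n - ε₁ n * (ρp + ρs n)))))
    (hσ₁ : ∀ n, σ₁ n = us n + (ρm - 2 * ε₁ n) * (us n - um) / (ρs n - ρm))
    (hσ₂ : ∀ n, σ₂ n = us n + (ρp - 2 * ε₁ n) * (up - us n) / (ρp - ρs n))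
    (hlt : ∀ n, σ₁ n < σ₂ n)
    (mn : ℕ → ℝ → ℝ)
    (hmn : ∀ n ξ, mn n ξ =
      if ξ < σ₁ n then ρm * um else if ξ < σ₂ n then ρs n * us n
      else ρp * up)
    (Ht : ℝ → ℝ) (hHt : ∀ y, Ht y = if y < 0 then ρm * um else ρp * up) :
    ∀ φ : ℝ → ℝ, ContDiff ℝ (⊤ : ℕ∞) φ → HasCompactSupport φ →
      Filter.Tendsto (fun n => ∫ ξ, mn n ξ * φ ξ) Filter.atTop
        (nhds ((σ * (ρp * up - ρm * um) -
          (ρp * up ^ 2 - ρm * um ^ 2)) * φ σ +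
          ∫ ξ, Ht (ξ - σ) * φ ξ)) := by
  intro φ hφC hφS
  have hρsinf := TSMDL.rhoAtTop γ ρm ρp um up hγ hρm hρp hu ε₁ ε₂ ρs us
    hε₁pos hε₂pos hε₁ hε₂ hρs hd1 hd2 hback hforw
  obtain ⟨h1, h2, h3⟩ := TSMDL.limits γ ρm ρp um up σ hγ hρm hρp hu hσ ε₁ ε₂ ρs us σ₁ σ₂
    hε₁pos hε₂pos hε₁ hε₂ hρs hd1 hd2 hback hforw hσ₁ hσ₂ hρsinf
  exact TSMDL.assemble ρm ρp um up σ _ σ₁ σ₂ ρs us hlt h1 h2 h3 mn hmn Ht hHt φ hφC hφS
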